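/- Let Σ = !![σ, υ; υ, γ] be a real symmetric positive definite 2×2 matrix, S = !![1, 0; −υ/σ, 1], H a 2×2 complex matrix, and H̃ = H · S⁻¹, with H̃₁₁ ≠ 0. Then the unconditional Granger-causality value GC = log( Re((H Σ H*)₁₁) / (σ·|H̃₁₁|²) ) equals 0 if and only if H̃₁₂ = 0. -/

import Mathlib

/-!
The normalization is an LDL factorization: with `L = S⁻¹ = !![1, 0; υ/σ, 1]` one has
`Σ = L · diag(σ, γ - υ²/σ) · Lᴴ`, so `H Σ Hᴴ = H̃ · diag(σ, γ - υ²/σ) · H̃ᴴ` and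
`Re (H Σ Hᴴ)₁₁ = σ |H̃₁₁|² + (γ - υ²/σ) |H̃₁₂|²`. The Schur complement `γ - υ²/σ` is positive,
so the logarithm vanishes exactly when the second summand does, i.e. when `H̃₁₂ = 0`.
-/

open Matrix

theorem inv_lowerUnitriangular {R : Type*} [CommRing R] (c : R) :
    (!![1, 0; c, 1] : Matrix (Fin 2) (Fin 2) R)⁻¹ = !![1, 0; -c, 1] := by
  refine inv_eq_left_inv ?_
  ext i j; fin_cases i <;> fin_cases j <;> simp

theorem map_ofReal_eq_lowerUnitriangular_mul_diagonal_mul_conjTranspose {σ : ℝ} (hσ : σ ≠ 0)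
    (υ γ : ℝ) :
    (!![σ, υ; υ, γ] : Matrix (Fin 2) (Fin 2) ℝ).map Complex.ofReal =
      !![1, 0; ((υ / σ : ℝ) : ℂ), 1] * diagonal (fun j => ((![σ, γ - υ ^ 2 / σ] j : ℝ) : ℂ)) *
        (!![1, 0; ((υ / σ : ℝ) : ℂ), 1])ᴴ := by
  have hσ' : (σ : ℂ) ≠ 0 := Complex.ofReal_ne_zero.mpr hσ
  ext i j; fin_cases i <;> fin_cases j <;> simp [mul_apply, Fin.sum_univ_two, vecMul_diagonal] <;>
    field_simp
  ring

theorem re_mul_diagonal_mul_conjTranspose_apply_self {m n : Type*} [Fintype n] [DecidableEq n]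
    (A : Matrix m n ℂ) (d : n → ℝ) (i : m) :
    ((A * diagonal (fun j => (d j : ℂ)) * Aᴴ) i i).re = ∑ j, d j * ‖A i j‖ ^ 2 := by
  rw [mul_apply, Complex.re_sum]
  refine Finset.sum_congr rfl fun j _ => ?_
  rw [mul_diagonal, conjTranspose_apply, Complex.sq_norm, Complex.normSq_apply]
  simp
  ring

theorem log_add_div_self_eq_zero_iff {a b : ℝ} (ha : 0 < a) (hb : 0 ≤ b) :
    Real.log ((a + b) / a) = 0 ↔ b = 0 := by
  constructor
  · intro h
    have h_one := Real.eq_one_of_pos_of_log_eq_zero (by positivity) h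
    rw [div_eq_one_iff_eq ha.ne'] at h_one
    linarith
  · rintro rfl
    simp [ha.ne']

theorem unconditional_gc_zero_iff_general
    (σ υ γ : ℝ) (hσ : 0 < σ) (hdet : 0 < σ * γ - υ ^ 2)
    (H : Matrix (Fin 2) (Fin 2) ℂ) :
    let Cov : Matrix (Fin 2) (Fin 2) ℝ := !![σ, υ; υ, γ]
    let S : Matrix (Fin 2) (Fin 2) ℝ := !![1, 0; -υ/σ, 1]
    let Ht : Matrix (Fin 2) (Fin 2) ℂ := H * (S.map (Complex.ofReal))⁻¹
    Ht 0 0 ≠ 0 →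
    (Real.log (((H * Cov.map (Complex.ofReal) * Hᴴ) 0 0).re
        / (σ * ‖Ht 0 0‖ ^ 2)) = 0 ↔ Ht 0 1 = 0) := by
  intro Cov S Ht hHt
  have hSinv : (S.map Complex.ofReal)⁻¹ = !![1, 0; ((υ / σ : ℝ) : ℂ), 1] := by
    have : S.map Complex.ofReal = !![1, 0; -((υ / σ : ℝ) : ℂ), 1] := by
      ext i j; fin_cases i <;> fin_cases j <;> simp [S, neg_div]
    rw [this, inv_lowerUnitriangular, neg_neg]
  have hspec : H * Cov.map Complex.ofReal * Hᴴ =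
      Ht * diagonal (fun j => ((![σ, γ - υ ^ 2 / σ] j : ℝ) : ℂ)) * Htᴴ := by
    rw [map_ofReal_eq_lowerUnitriangular_mul_diagonal_mul_conjTranspose hσ.ne']
    simp only [Ht, hSinv, conjTranspose_mul, Matrix.mul_assoc]
  have hδ : 0 < γ - υ ^ 2 / σ := by
    rw [sub_pos, div_lt_iff₀ hσ]
    linarith
  rw [hspec, re_mul_diagonal_mul_conjTranspose_apply_self, Fin.sum_univ_two]
  simp only [cons_val_zero, cons_val_one]
  rw [log_add_div_self_eq_zero_iff (by positivity) (by positivity), mul_eq_zero,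
    or_iff_right hδ.ne', pow_eq_zero_iff two_ne_zero, norm_eq_zero]

/-- The unconditional Granger-causality value
`GC = log( Re((H Σ H*)₁₁) / (σ|H̃₁₁|²) )` vanishes if and only if `H̃₁₂ = 0`. -/
theorem unconditional_gc_zero_iff
    (σ υ γ : ℝ) (hσ : 0 < σ) (hγ : 0 < γ) (hdet : 0 < σ * γ - υ ^ 2)
    (H : Matrix (Fin 2) (Fin 2) ℂ) :
    let Cov : Matrix (Fin 2) (Fin 2) ℝ := !![σ, υ; υ, γ]
    let S : Matrix (Fin 2) (Fin 2) ℝ := !![1, 0; -υ/σ, 1]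
    let Ht : Matrix (Fin 2) (Fin 2) ℂ := H * (S.map (Complex.ofReal))⁻¹
    Ht 0 0 ≠ 0 →
    (Real.log (((H * Cov.map (Complex.ofReal) * Hᴴ) 0 0).re
        / (σ * ‖Ht 0 0‖ ^ 2)) = 0 ↔ Ht 0 1 = 0) :=
  unconditional_gc_zero_iff_general σ υ γ hσ hdet H
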